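/- arXiv:1910.02566 — 3 statements merged into one kernel-verified Lean document; each statement's English description precedes it below -/
import Mathlib

section
/- Let X be a random vector in R^d with distribution N(0, Σ), where Σ is diagonal with diagonal entries σ_1^2 > σ_2^2 ≥ σ_3^2 ≥ ... ≥ σ_d^2 > 0. With the centers μ_1 = (−σ_1√(2/π), 0, ..., 0) and μ_2 = (σ_1√(2/π), 0, ..., 0), the population 2-means objective satisfies E[min(‖X − μ_1‖^2, ‖X − μ_2‖^2)] = (Σ_{i=1}^d σ_i^2) − 2σ_1^2/π. -/
open MeasureTheory ProbabilityTheory Real Filter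
open scoped ENNReal NNReal Topology RealInnerProductSpace

noncomputable section

/-- The multivariate Gaussian measure on `EuclideanSpace ℝ (Fin d)` with mean `m` and
diagonal covariance matrix with diagonal entries `v i` (the variances). -/
def diagGaussian (d : ℕ) (m : Fin d → ℝ) (v : Fin d → ℝ≥0) :
    Measure (EuclideanSpace ℝ (Fin d)) :=
  (Measure.pi fun i => gaussianReal (m i) (v i)).map
    (MeasurableEquiv.toLp 2 (Fin d → ℝ))

/-- The two-component Gaussian mixture `(1/2) N(-θ, D) + (1/2) N(θ, D)` with `D = diag v`. -/
def mixGaussian (d : ℕ) (θ : Fin d → ℝ) (v : Fin d → ℝ≥0) :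
    Measure (EuclideanSpace ℝ (Fin d)) :=
  (2⁻¹ : ℝ≥0∞) • diagGaussian d (fun i => -θ i) v + (2⁻¹ : ℝ≥0∞) • diagGaussian d θ v

/-- Conditional expectation `E[f(X) | X ∈ A]` of a real-valued function given an event. -/
def condMean {Ω : Type*} [MeasurableSpace Ω] (μ : Measure Ω) (A : Set Ω) (f : Ω → ℝ) : ℝ :=
  (∫ x in A, f x ∂μ) / (μ A).toReal

/-- Conditional expectation `E[f(X) | X ∈ A]` of a vector-valued function given an event. -/
def condMeanVec {Ω : Type*} [MeasurableSpace Ω] (μ : Measure Ω) (A : Set Ω)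
    {F : Type*} [NormedAddCommGroup F] [NormedSpace ℝ F] (f : Ω → F) : F :=
  ((μ A).toReal)⁻¹ • ∫ x in A, f x ∂μ

/-- The standard normal cumulative distribution function. -/
def stdCDF (t : ℝ) : ℝ := (gaussianReal 0 1 (Set.Iic t)).toReal

/-- Population within-cluster sum of squares of symmetric 2-means with centers `t, -t`. -/
def WpopSym {d : ℕ} (P : Measure (EuclideanSpace ℝ (Fin d)))
    (t : EuclideanSpace ℝ (Fin d)) : ℝ :=
  ∫ x, min (‖x - t‖^2) (‖x + t‖^2) ∂P

/-! With `t = μ₂ = -μ₁`, expanding both squares gives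
`min (‖x + t‖², ‖x - t‖²) = ‖x‖² + ‖t‖² - 2 |⟪x, t⟫|` pointwise, and `⟪x, t⟫ = ‖t‖ x₁`.
Taking expectations, `E ‖X‖² = ∑ σᵢ²` and `E |X₁| = σ₁ √(2/π) = ‖t‖`, so the objective is
`∑ σᵢ² + ‖t‖² - 2 ‖t‖² = ∑ σᵢ² - 2 σ₁² / π`. -/

theorem min_norm_add_sq_norm_sub_sq {E : Type*} [NormedAddCommGroup E] [InnerProductSpace ℝ E]
    (x a : E) : min (‖x + a‖ ^ 2) (‖x - a‖ ^ 2) = ‖x‖ ^ 2 + ‖a‖ ^ 2 - 2 * |⟪x, a⟫| := by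
  rw [norm_add_sq_real, norm_sub_sq_real]
  rcases abs_cases ⟪x, a⟫ with ⟨h, hs⟩ | ⟨h, hs⟩
  · rw [h, min_eq_right (by linarith)]; ring
  · rw [h, min_eq_left (by linarith)]; ring

theorem integral_min_norm_add_sq_norm_sub_sq {E : Type*} [NormedAddCommGroup E]
    [InnerProductSpace ℝ E] [MeasurableSpace E] {P : Measure E} [IsProbabilityMeasure P] (t : E)
    (hsq : Integrable (fun x ↦ ‖x‖ ^ 2) P) (hinner : Integrable (fun x ↦ ⟪x, t⟫) P) :
    ∫ x, min (‖x + t‖ ^ 2) (‖x - t‖ ^ 2) ∂P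
      = ∫ x, ‖x‖ ^ 2 ∂P + ‖t‖ ^ 2 - 2 * ∫ x, |⟪x, t⟫| ∂P := by
  have hsq_add : Integrable (fun x ↦ ‖x‖ ^ 2 + ‖t‖ ^ 2) P := hsq.add (integrable_const _)
  simp_rw [min_norm_add_sq_norm_sub_sq]
  rw [integral_sub hsq_add (hinner.abs.const_mul 2),
    integral_add hsq (integrable_const _), integral_const_mul, integral_const, probReal_univ,
    one_smul]

theorem integral_Ioi_mul_exp_neg_mul_sq {b : ℝ} (hb : 0 < b) :
    ∫ x in Set.Ioi (0 : ℝ), x * rexp (-b * x ^ 2) = (2 * b)⁻¹ := by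
  have h := integral_mul_cexp_neg_mul_sq (b := (b : ℂ)) (by simpa using hb)
  have hcast : ∀ x : ℝ, (x : ℂ) * Complex.exp (-b * (x : ℂ) ^ 2) = ↑(x * rexp (-b * x ^ 2)) := by
    intro x
    push_cast
    rfl
  simp_rw [hcast, integral_complex_ofReal] at h
  exact_mod_cast h

theorem integrable_sq_gaussianReal (μ : ℝ) (v : ℝ≥0) :
    Integrable (fun x ↦ x ^ 2) (gaussianReal μ v) :=
  (memLp_id_gaussianReal 2).integrable_sq

theorem integral_sq_gaussianReal (μ : ℝ) (v : ℝ≥0) :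
    ∫ x, x ^ 2 ∂gaussianReal μ v = v + μ ^ 2 := by
  have h := variance_eq_sub (memLp_id_gaussianReal (μ := μ) (v := v) 2)
  rw [variance_id_gaussianReal] at h
  simp only [Pi.pow_apply, id_eq, integral_id_gaussianReal] at h
  linarith

theorem integral_abs_gaussianReal (v : ℝ≥0) :
    ∫ x, |x| ∂gaussianReal 0 v = √(v : ℝ) * √(2 / π) := by
  rcases eq_or_ne v 0 with rfl | hv
  · simp [gaussianReal_zero_var]
  have hv0 : 0 < (v : ℝ) := by positivity
  have hpdf : ∀ x, gaussianPDFReal 0 v x • |x|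
      = (√(2 * π * v))⁻¹ * (|x| * rexp (-(2 * (v : ℝ))⁻¹ * |x| ^ 2)) := by
    intro x
    rw [gaussianPDFReal, smul_eq_mul, sq_abs, sub_zero]
    ring_nf
  have hsqrt : √(2 * π * v) * (√(v : ℝ) * √(2 / π)) = 2 * v := by
    rw [← Real.sqrt_mul hv0.le, ← Real.sqrt_mul (by positivity),
      show 2 * π * v * (v * (2 / π)) = (2 * v) ^ 2 by field_simp, Real.sqrt_sq (by positivity)]
  rw [integral_gaussianReal_eq_integral_smul hv]
  simp_rw [hpdf]
  rw [integral_const_mul, integral_comp_abs (f := fun y ↦ y * rexp (-(2 * (v : ℝ))⁻¹ * y ^ 2)),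
    integral_Ioi_mul_exp_neg_mul_sq (by positivity)]
  field_simp
  linarith

section diagGaussian

variable {d : ℕ} (m : Fin d → ℝ) (v : Fin d → ℝ≥0)

instance : IsProbabilityMeasure (diagGaussian d m v) :=
  Measure.isProbabilityMeasure_map (by fun_prop)

variable {E : Type*} [NormedAddCommGroup E]

theorem integrable_diagGaussian_comp_eval {i : Fin d} {f : ℝ → E}
    (hf : Integrable f (gaussianReal (m i) (v i))) :
    Integrable (fun x ↦ f (x i)) (diagGaussian d m v) := by
  rw [diagGaussian, integrable_map_equiv]
  exact integrable_comp_eval hf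

theorem integral_diagGaussian_comp_eval [NormedSpace ℝ E] {i : Fin d} {f : ℝ → E}
    (hf : AEStronglyMeasurable f (gaussianReal (m i) (v i))) :
    ∫ x, f (x i) ∂diagGaussian d m v = ∫ y, f y ∂gaussianReal (m i) (v i) := by
  rw [diagGaussian, integral_map_equiv]
  exact integral_comp_eval hf

theorem integrable_norm_sq_diagGaussian :
    Integrable (fun x ↦ ‖x‖ ^ 2) (diagGaussian d m v) := by
  simp_rw [EuclideanSpace.real_norm_sq_eq]
  exact integrable_finsetSum _ fun i _ ↦ integrable_diagGaussian_comp_eval m v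
    (integrable_sq_gaussianReal _ _)

theorem integral_norm_sq_diagGaussian :
    ∫ x, ‖x‖ ^ 2 ∂diagGaussian d m v = ∑ i, ((v i : ℝ) + m i ^ 2) := by
  simp_rw [EuclideanSpace.real_norm_sq_eq]
  rw [integral_finsetSum _ fun i _ ↦ integrable_diagGaussian_comp_eval m v
    (integrable_sq_gaussianReal _ _)]
  refine Finset.sum_congr rfl fun i _ ↦ ?_
  rw [integral_diagGaussian_comp_eval m v (f := fun y ↦ y ^ 2) (by fun_prop),
    integral_sq_gaussianReal]

end diagGaussian

theorem sigclust_null_population_objective_general (d : ℕ) (v : Fin (d+2) → ℝ≥0) :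
    let μ1 : EuclideanSpace ℝ (Fin (d+2)) :=
      EuclideanSpace.single 0 (-(Real.sqrt (v 0) * Real.sqrt (2/π)))
    let μ2 : EuclideanSpace ℝ (Fin (d+2)) :=
      EuclideanSpace.single 0 (Real.sqrt (v 0) * Real.sqrt (2/π))
    ∫ x, min (‖x - μ1‖^2) (‖x - μ2‖^2) ∂(diagGaussian (d+2) 0 v)
      = (∑ i, (v i : ℝ)) - 2 * (v 0 : ℝ) / π := by
  intro μ1 μ2
  set c := √(v 0 : ℝ) * √(2 / π)
  have hc : 0 ≤ c := by positivity
  have hc_sq : c ^ 2 = 2 * v 0 / π := by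
    rw [mul_pow, Real.sq_sqrt (by positivity), Real.sq_sqrt (by positivity)]
    ring
  have hμ1 : μ1 = -μ2 := PiLp.single_neg 2 0
  have hinner : ∀ x : EuclideanSpace ℝ (Fin (d+2)), ⟪x, μ2⟫ = c * x 0 := fun x ↦ by
    rw [EuclideanSpace.inner_single_right]; rfl
  simp_rw [hμ1, sub_neg_eq_add]
  rw [integral_min_norm_add_sq_norm_sub_sq μ2 (integrable_norm_sq_diagGaussian 0 v)
    (by simp_rw [hinner]; exact (integrable_diagGaussian_comp_eval 0 v
      ((memLp_id_gaussianReal 1).integrable (by norm_num))).const_mul c)]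
  have hnorm : ‖μ2‖ = c := by rw [PiLp.norm_single, Real.norm_of_nonneg hc]
  simp_rw [hinner, abs_mul, abs_of_nonneg hc]
  rw [integral_const_mul, integral_diagGaussian_comp_eval 0 v (f := fun y ↦ |y|) (by fun_prop),
    Pi.zero_apply, integral_abs_gaussianReal, integral_norm_sq_diagGaussian, hnorm]
  simp only [Pi.zero_apply, ne_eq, OfNat.ofNat_ne_zero, not_false_eq_true, zero_pow, add_zero]
  linear_combination -hc_sq

/-- For `X ~ N(0, Σ)` with `Σ = diag(σ₁² > σ₂² ≥ ⋯ ≥ σ_d² > 0)`, and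
centers `μ₁ = (-σ₁√(2/π), 0, …, 0)`, `μ₂ = -μ₁`, the population 2-means objective equals
`∑ᵢ σᵢ² - 2σ₁²/π`. -/
theorem sigclust_null_population_objective (d : ℕ) (v : Fin (d+2) → ℝ≥0)
    (hpos : ∀ i, 0 < v i)
    (hmono : ∀ i j : Fin (d+2), i ≤ j → v j ≤ v i)
    (hstrict : v 1 < v 0) :
    let μ1 : EuclideanSpace ℝ (Fin (d+2)) :=
      EuclideanSpace.single 0 (-(Real.sqrt (v 0) * Real.sqrt (2/π)))
    let μ2 : EuclideanSpace ℝ (Fin (d+2)) :=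
      EuclideanSpace.single 0 (Real.sqrt (v 0) * Real.sqrt (2/π))
    ∫ x, min (‖x - μ1‖^2) (‖x - μ2‖^2) ∂(diagGaussian (d+2) 0 v)
      = (∑ i, (v i : ℝ)) - 2 * (v 0 : ℝ) / π :=
  sigclust_null_population_objective_general d v
end
end

section
/- Let a > 0 and σ > 0, and let Y be a real random variable with the two-component Gaussian mixture distribution (1/2) N(−a/2, σ^2) + (1/2) N(a/2, σ^2), and let Z ~ N(0,1). Then E[Y | Y > 0] = √(2/π) σ e^{−a^2/(8σ^2)} + (a/2) P(|Z| < a/(2σ)). -/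
/-!
For a single Gaussian, `(x - μ) φ_{μ,v}(x) = -v φ'_{μ,v}(x)`, so the truncated mean is
`∫_{x > 0} x dN(μ, v) = v φ_{μ,v}(0) + μ P(N(μ, v) > 0)`. Reflecting `x ↦ -x` gives
`P(N(-m, v) > 0) + P(N(m, v) > 0) = 1`, so the symmetric mixture puts mass `1/2` on `{Y > 0}` and
`E[Y | Y > 0] = 2 v φ_{m,v}(0) + m (P(N(m, v) > 0) - P(N(-m, v) > 0))`. With `m = a/2`, `v = σ²`,
standardizing turns the difference of probabilities into `P(|Z| < a/(2σ))`.
-/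

open MeasureTheory ProbabilityTheory Real
open scoped ENNReal NNReal

noncomputable section

open Set Filter Topology

section Mixture

variable {α E : Type*} [MeasurableSpace α] [NormedAddCommGroup E] [NormedSpace ℝ E]
  {μ ν : Measure α} {p q : ℝ≥0∞} {f : α → E} {s : Set α}

lemma setIntegral_smul_add_smul_measure (hp : p ≠ ∞) (hq : q ≠ ∞)
    (hμ : IntegrableOn f s μ) (hν : IntegrableOn f s ν) :
    ∫ x in s, f x ∂(p • μ + q • ν) = p.toReal • ∫ x in s, f x ∂μ + q.toReal • ∫ x in s, f x ∂ν := by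
  rw [Measure.restrict_add, Measure.restrict_smul, Measure.restrict_smul,
    integral_add_measure (hμ.smul_measure hp) (hν.smul_measure hq),
    integral_smul_measure, integral_smul_measure]

end Mixture

lemma measureReal_Ioo_eq_sub {μ : Measure ℝ} [IsFiniteMeasure μ] [NullSingletonClass μ] {a b : ℝ}
    (hab : a ≤ b) : μ.real (Ioo a b) = μ.real (Ioi a) - μ.real (Ioi b) := by
  rw [measureReal_congr Ioo_ae_eq_Ioc, ← Ioi_sdiff_Ioi,
    measureReal_sdiff (Ioi_subset_Ioi hab) measurableSet_Ioi]

namespace ProbabilityTheory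

lemma gaussianPDFReal_toNNReal_sq {σ : ℝ} (hσ : 0 < σ) (μ x : ℝ) :
    gaussianPDFReal μ (σ ^ 2).toNNReal x = rexp (-(x - μ) ^ 2 / (2 * σ ^ 2)) / (σ * √(2 * π)) := by
  rw [gaussianPDFReal, Real.coe_toNNReal _ (sq_nonneg σ), mul_comm (2 * π),
    Real.sqrt_mul (sq_nonneg σ), Real.sqrt_sq hσ.le, inv_mul_eq_div]

lemma hasDerivAt_gaussianPDFReal (μ : ℝ) (v : ℝ≥0) (x : ℝ) :
    HasDerivAt (gaussianPDFReal μ v) (-(x - μ) / v * gaussianPDFReal μ v x) x := by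
  have h : HasDerivAt (fun y ↦ -(y - μ) ^ 2 / (2 * v)) (-(2 * (x - μ)) / (2 * v)) x := by
    simpa using (((hasDerivAt_id x).sub_const μ).pow 2).neg.div_const (2 * (v : ℝ))
  exact (h.exp.const_mul _).congr_deriv (by rw [gaussianPDFReal]; ring)

lemma tendsto_gaussianPDFReal_atTop (μ : ℝ) (v : ℝ≥0) :
    Tendsto (gaussianPDFReal μ v) atTop (𝓝 0) := by
  rcases eq_or_ne v 0 with rfl | hv
  · rw [gaussianPDFReal_zero_var]
    exact tendsto_const_nhds
  have hsq : Tendsto (fun x : ℝ ↦ (x - μ) ^ 2) atTop atTop :=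
    (tendsto_pow_atTop two_ne_zero).comp (tendsto_atTop_add_const_right _ (-μ) tendsto_id)
  have hexp : Tendsto (fun x : ℝ ↦ -(x - μ) ^ 2 / (2 * v)) atTop atBot :=
    (tendsto_neg_atTop_atBot.comp hsq).atBot_div_const (by positivity)
  simpa [gaussianPDFReal_def] using (tendsto_exp_atBot.comp hexp).const_mul (√(2 * π * v))⁻¹

variable {μ : ℝ} {v : ℝ≥0}

section Density

variable {E : Type*} [NormedAddCommGroup E] [NormedSpace ℝ E]

lemma integrable_gaussianReal_iff (hv : v ≠ 0) {f : ℝ → E} :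
    Integrable f (gaussianReal μ v) ↔ Integrable (fun x ↦ gaussianPDFReal μ v x • f x) := by
  rw [gaussianReal_of_var_ne_zero _ hv, integrable_withDensity_iff_integrable_smul'
    (measurable_gaussianPDF μ v) (ae_of_all _ fun _ ↦ gaussianPDF_lt_top)]
  simp only [toReal_gaussianPDF]

lemma setIntegral_gaussianReal_eq_setIntegral_smul (hv : v ≠ 0) (f : ℝ → E) {s : Set ℝ}
    (hs : MeasurableSet s) :
    ∫ x in s, f x ∂gaussianReal μ v = ∫ x in s, gaussianPDFReal μ v x • f x := by
  rw [gaussianReal_of_var_ne_zero _ hv,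
    setIntegral_withDensity_eq_setIntegral_toReal_smul (measurable_gaussianPDF μ v)
      (ae_of_all _ fun _ ↦ gaussianPDF_lt_top) f hs]
  simp only [toReal_gaussianPDF]

end Density

lemma integrable_id_gaussianReal : Integrable id (gaussianReal μ v) :=
  memLp_one_iff_integrable.1 (memLp_id_gaussianReal 1)

lemma integral_Ioi_sub_mul_gaussianPDFReal (hv : v ≠ 0) (b : ℝ) :
    ∫ x in Ioi b, (x - μ) * gaussianPDFReal μ v x = v * gaussianPDFReal μ v b := by
  have hderiv (x : ℝ) : HasDerivAt (fun y ↦ -v * gaussianPDFReal μ v y)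
      ((x - μ) * gaussianPDFReal μ v x) x := by
    refine ((hasDerivAt_gaussianPDFReal μ v x).const_mul (-(v : ℝ))).congr_deriv ?_
    field_simp
  have hint : Integrable (fun x ↦ (x - μ) * gaussianPDFReal μ v x) := by
    simpa [mul_comm] using (integrable_gaussianReal_iff hv).1
      ((integrable_id_gaussianReal).sub (integrable_const μ))
  rw [integral_Ioi_of_hasDerivAt_of_tendsto' (fun x _ ↦ hderiv x) hint.integrableOn
    (by simpa using (tendsto_gaussianPDFReal_atTop μ v).const_mul (-(v : ℝ)))]
  ring

lemma setIntegral_Ioi_id_gaussianReal (hv : v ≠ 0) (b : ℝ) :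
    ∫ x in Ioi b, x ∂gaussianReal μ v
      = v * gaussianPDFReal μ v b + μ * (gaussianReal μ v).real (Ioi b) := by
  have hint : Integrable (fun x ↦ x - μ) (gaussianReal μ v) :=
    (integrable_id_gaussianReal).sub (integrable_const μ)
  calc ∫ x in Ioi b, x ∂gaussianReal μ v
      = ∫ x in Ioi b, (x - μ) ∂gaussianReal μ v + ∫ x in Ioi b, μ ∂gaussianReal μ v := by
        rw [← integral_add hint.integrableOn (integrable_const μ).integrableOn]
        simp
    _ = _ := by
        rw [setIntegral_gaussianReal_eq_setIntegral_smul hv _ measurableSet_Ioi, setIntegral_const]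
        simp only [smul_eq_mul, mul_comm (gaussianPDFReal μ v _)]
        rw [integral_Ioi_sub_mul_gaussianPDFReal hv]
        ring

lemma gaussianReal_map_sub_div_sqrt (hv : v ≠ 0) :
    (gaussianReal μ v).map (fun x ↦ (x - μ) / √v) = gaussianReal 0 1 := by
  have hcomp : (fun x ↦ (x - μ) / √v) = (· / √v) ∘ (· - μ) := rfl
  rw [hcomp, ← Measure.map_map (by fun_prop) (by fun_prop), gaussianReal_map_sub_const,
    gaussianReal_map_div_const, sub_self, zero_div]
  congr 1
  ext
  simp [hv]

lemma gaussianReal_Ioi (hv : v ≠ 0) (b : ℝ) :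
    gaussianReal μ v (Ioi b) = gaussianReal 0 1 (Ioi ((b - μ) / √v)) := by
  have hsqrt : 0 < √(v : ℝ) := by positivity
  rw [← gaussianReal_map_sub_div_sqrt (μ := μ) hv,
    Measure.map_apply (by fun_prop) measurableSet_Ioi]
  congr 1
  ext x
  simp [div_lt_div_iff_of_pos_right hsqrt]

lemma gaussianReal_neg_real_Ioi_add_real_Ioi_neg (hv : v ≠ 0) (b : ℝ) :
    (gaussianReal (-μ) v).real (Ioi b) + (gaussianReal μ v).real (Ioi (-b)) = 1 := by
  have := nullSingletonClass_gaussianReal (μ := μ) hv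
  have hreflect : (gaussianReal (-μ) v).real (Ioi b) = (gaussianReal μ v).real (Iio (-b)) := by
    rw [← gaussianReal_map_neg, map_measureReal_apply measurable_neg measurableSet_Ioi]
    congr 1
    ext
    simp
  rw [hreflect, ← compl_Ici, probReal_compl_eq_one_sub measurableSet_Ici,
    measureReal_congr Ioi_ae_eq_Ici, sub_add_cancel]

end ProbabilityTheory

lemma condMean_gaussianMixture_Ioi_zero {v : ℝ≥0} (hv : v ≠ 0) (m : ℝ) :
    condMean ((2⁻¹ : ℝ≥0∞) • gaussianReal (-m) v + (2⁻¹ : ℝ≥0∞) • gaussianReal m v) (Ioi 0) id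
      = 2 * v * gaussianPDFReal m v 0
        + m * ((gaussianReal m v).real (Ioi 0) - (gaussianReal (-m) v).real (Ioi 0)) := by
  have hmass : (gaussianReal (-m) v).real (Ioi 0) + (gaussianReal m v).real (Ioi 0) = 1 := by
    simpa using gaussianReal_neg_real_Ioi_add_real_Ioi_neg (μ := m) hv 0
  have hpdf : gaussianPDFReal (-m) v 0 = gaussianPDFReal m v 0 := by simp [gaussianPDFReal]
  rw [condMean, ← measureReal_def,
    measureReal_add_apply (by simp [ENNReal.mul_eq_top]) (by simp [ENNReal.mul_eq_top]),
    setIntegral_smul_add_smul_measure (by simp) (by simp) integrable_id_gaussianReal.integrableOn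
      integrable_id_gaussianReal.integrableOn]
  simp only [id_eq, measureReal_ennreal_smul_apply, setIntegral_Ioi_id_gaussianReal hv, hpdf,
    ENNReal.toReal_inv, ENNReal.toReal_ofNat, smul_eq_mul, ← mul_add, hmass]
  field_simp
  ring

/-- For `Y ~ (1/2)N(-a/2, σ²) + (1/2)N(a/2, σ²)` with `a > 0`, `σ > 0`,
and `Z ~ N(0,1)`:
`E[Y | Y > 0] = √(2/π) σ e^{-a²/(8σ²)} + (a/2) P(|Z| < a/(2σ))`. -/
theorem mixture_conditional_mean (a σ : ℝ) (ha : 0 < a) (hσ : 0 < σ) :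
    condMean ((2⁻¹ : ℝ≥0∞) • gaussianReal (-(a/2)) ((σ^2).toNNReal)
        + (2⁻¹ : ℝ≥0∞) • gaussianReal (a/2) ((σ^2).toNNReal))
      {y | 0 < y} id
      = Real.sqrt (2/π) * σ * Real.exp (-(a^2) / (8 * σ^2))
        + a/2 * (gaussianReal 0 1 {z | |z| < a/(2*σ)}).toReal := by
  have hv : (σ ^ 2).toNNReal ≠ 0 := by simpa using hσ.ne'
  have hsqrt : √((σ ^ 2).toNNReal : ℝ) = σ := by
    rw [Real.coe_toNNReal _ (sq_nonneg σ), Real.sqrt_sq hσ.le]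
  have hprob (m : ℝ) : (gaussianReal m (σ ^ 2).toNNReal).real (Ioi 0)
      = (gaussianReal 0 1).real (Ioi (-(m / σ))) := by
    rw [measureReal_def, gaussianReal_Ioi hv, hsqrt, zero_sub, neg_div]
    rfl
  have hset : {z : ℝ | |z| < a / (2 * σ)} = Ioo (-(a / 2 / σ)) (a / 2 / σ) := by
    ext
    simp [abs_lt, div_div]
  have : NullSingletonClass (gaussianReal 0 1) := nullSingletonClass_gaussianReal one_ne_zero
  rw [show {y : ℝ | 0 < y} = Ioi 0 from rfl, condMean_gaussianMixture_Ioi_zero hv, hprob, hprob,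
    neg_div, neg_neg, ← measureReal_def, hset,
    measureReal_Ioo_eq_sub (neg_le_self (by positivity)), gaussianPDFReal_toNNReal_sq hσ,
    Real.coe_toNNReal _ (sq_nonneg σ), Real.sqrt_div zero_le_two, Real.sqrt_mul zero_le_two,
    show -(0 - a / 2) ^ 2 / (2 * σ ^ 2) = -a ^ 2 / (8 * σ ^ 2) by ring]
  generalize rexp (-a ^ 2 / (8 * σ ^ 2)) = E
  field_simp
  linear_combination (-2 * σ * E) * Real.mul_self_sqrt zero_le_two
end
end

section
/- Let a ≥ 0 and σ_1 > 0, set u = a/(2σ_1) and κ = (a/2) P(|Z| ≤ u) + √(2/π) σ_1 e^{−u^2/2} where Z ~ N(0,1). Then κ^2 − (2/π)(σ_1^2 + a^2/4) ≥ a^4/(240 σ_1^2 π) whenever 0 ≤ a ≤ 4σ_1, and κ^2 − (2/π)(σ_1^2 + a^2/4) ≥ a^2/40 whenever a ≥ 4σ_1. -/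
/-!
With `u = a / (2σ₁)` one has `κ = √(2/π) σ₁ g(u)` for `g(u) = u ∫₀ᵘ e^{-t²/2} dt + e^{-u²/2}`
(`kappaProfile`; in fact `g(u) = √(π/2) E[max(|Z|, u)]`), and the gap equals
`(2/π) σ₁² (g(u)² - 1 - u²)`. Integrating by parts, `g(u) = 1 + ∫₀ᵘ (u - t) e^{-t²/2} dt`, so the
cubic Taylor lower bound of `e^{-x}` gives a polynomial lower bound on `g`, which settles `u ≤ 2`.
For `u ≥ 2`, Mills' ratio inequality `u ∫ᵤ^∞ e^{-t²/2} dt ≤ e^{-u²/2}` gives `g(u) ≥ √(π/2) u`,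
enough since `π > 3`.
-/

open MeasureTheory ProbabilityTheory Real Set Filter Topology

noncomputable section

lemma one_sub_add_sub_le_exp_neg {x : ℝ} (hx : 0 ≤ x) :
    1 - x + x ^ 2 / 2 - x ^ 3 / 6 ≤ exp (-x) := by
  have hderiv (y : ℝ) : HasDerivAt (fun y ↦ (1 - y + y ^ 2 / 2 - y ^ 3 / 6) * exp y)
      (-(y ^ 3 / 6) * exp y) y := by
    have hT := (((hasDerivAt_const y (1 : ℝ)).sub (hasDerivAt_id y)).add
        ((hasDerivAt_pow 2 y).div_const 2)).sub ((hasDerivAt_pow 3 y).div_const 6)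
    exact (hT.mul (hasDerivAt_exp y)).congr_deriv
      (by simp only [Pi.sub_apply, Pi.add_apply, id_eq]; ring)
  have hanti : AntitoneOn (fun y ↦ (1 - y + y ^ 2 / 2 - y ^ 3 / 6) * exp y) (Ici 0) :=
    antitoneOn_of_hasDerivWithinAt_nonpos (convex_Ici 0)
      (fun y _ ↦ (hderiv y).continuousAt.continuousWithinAt)
      (fun y _ ↦ (hderiv y).hasDerivWithinAt)
      (fun y hy ↦ by
        rw [interior_Ici] at hy
        have : 0 ≤ y ^ 3 / 6 * exp y := by have := hy.out.le; positivity
        linarith)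
  have h := hanti self_mem_Ici hx hx
  rw [exp_neg, ← one_div, le_div_iff₀ (exp_pos x)]
  simpa using h

lemma hasDerivAt_neg_exp_neg_sq_div_two (t : ℝ) :
    HasDerivAt (fun t ↦ -exp (-t ^ 2 / 2)) (t * exp (-t ^ 2 / 2)) t := by
  have := ((hasDerivAt_pow 2 t).neg.div_const 2).exp.neg
  exact this.congr_deriv (by simp only [Pi.neg_apply]; ring)

lemma integral_mul_exp_neg_sq_div_two (a b : ℝ) :
    ∫ t in a..b, t * exp (-t ^ 2 / 2) = exp (-a ^ 2 / 2) - exp (-b ^ 2 / 2) := by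
  rw [intervalIntegral.integral_eq_sub_of_hasDerivAt
    (fun t _ ↦ hasDerivAt_neg_exp_neg_sq_div_two t)
    (by apply Continuous.intervalIntegrable; fun_prop)]
  ring

lemma tendsto_exp_neg_sq_div_two_atTop : Tendsto (fun t : ℝ ↦ exp (-t ^ 2 / 2)) atTop (𝓝 0) :=
  tendsto_exp_atBot.comp <| (tendsto_neg_atTop_atBot.comp
    (tendsto_pow_atTop two_ne_zero)).atBot_div_const two_pos

lemma integrable_exp_neg_sq_div_two : Integrable fun t : ℝ ↦ exp (-t ^ 2 / 2) := by
  simpa [neg_div, div_eq_inv_mul] using integrable_exp_neg_mul_sq (b := 1 / 2) one_half_pos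

lemma integrable_mul_exp_neg_sq_div_two : Integrable fun t : ℝ ↦ t * exp (-t ^ 2 / 2) := by
  simpa [neg_div, div_eq_inv_mul] using integrable_mul_exp_neg_mul_sq (b := 1 / 2) one_half_pos

lemma integral_Ioi_mul_exp_neg_sq_div_two (a : ℝ) :
    ∫ t in Ioi a, t * exp (-t ^ 2 / 2) = exp (-a ^ 2 / 2) := by
  rw [integral_Ioi_of_hasDerivAt_of_tendsto' (fun t _ ↦ hasDerivAt_neg_exp_neg_sq_div_two t)
    integrable_mul_exp_neg_sq_div_two.integrableOn
    (by simpa using tendsto_exp_neg_sq_div_two_atTop.neg)]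
  ring

lemma integral_Ioi_zero_exp_neg_sq_div_two : ∫ t in Ioi 0, exp (-t ^ 2 / 2) = √(π / 2) := by
  have h := integral_gaussian_Ioi (1 / 2)
  rw [show π / (1 / 2) = π / 2 * 2 ^ 2 by ring, sqrt_mul (by positivity), sqrt_sq two_pos.le,
    mul_div_cancel_right₀ _ two_ne_zero] at h
  simpa [neg_div, div_eq_inv_mul] using h

lemma mul_integral_Ioi_exp_neg_sq_div_two_le (u : ℝ) :
    u * ∫ t in Ioi u, exp (-t ^ 2 / 2) ≤ exp (-u ^ 2 / 2) := by
  rw [← integral_const_mul, ← integral_Ioi_mul_exp_neg_sq_div_two]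
  refine setIntegral_mono_on (integrable_exp_neg_sq_div_two.const_mul u).integrableOn
    integrable_mul_exp_neg_sq_div_two.integrableOn measurableSet_Ioi fun t ht ↦ ?_
  gcongr
  exact ht.out.le

lemma gaussianReal_abs_le_toReal {u : ℝ} (hu : 0 ≤ u) :
    (gaussianReal 0 1 {z | |z| ≤ u}).toReal = √(2 / π) * ∫ t in (0)..u, exp (-t ^ 2 / 2) := by
  have hset : {z : ℝ | |z| ≤ u} = Icc (-u) u := by ext z; simp [abs_le]
  have hpdf : gaussianPDFReal 0 1 = fun t ↦ (√(2 * π))⁻¹ * exp (-t ^ 2 / 2) := by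
    ext t; simp [gaussianPDFReal]
  have hint : ∀ a b : ℝ, IntervalIntegrable (fun t ↦ exp (-t ^ 2 / 2)) volume a b :=
    fun a b ↦ integrable_exp_neg_sq_div_two.intervalIntegrable
  have heven : ∫ t in (-u)..0, exp (-t ^ 2 / 2) = ∫ t in (0)..u, exp (-t ^ 2 / 2) := by
    have h := intervalIntegral.integral_comp_neg (a := 0) (b := u) fun t ↦ exp (-t ^ 2 / 2)
    simp only [neg_sq, neg_zero] at h
    exact h.symm
  have hconst : (√(2 * π))⁻¹ * 2 = √(2 / π) := by
    have : √(2 / π) * √(2 * π) = 2 := by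
      rw [← sqrt_mul (by positivity), show 2 / π * (2 * π) = 2 ^ 2 by field_simp,
        sqrt_sq two_pos.le]
    field_simp
    linarith
  rw [gaussianReal_apply_eq_integral 0 one_ne_zero,
    ENNReal.toReal_ofReal (integral_nonneg fun t ↦ gaussianPDFReal_nonneg 0 1 t), hset,
    integral_Icc_eq_integral_Ioc, ← intervalIntegral.integral_of_le (by linarith), hpdf,
    intervalIntegral.integral_const_mul,
    ← intervalIntegral.integral_add_adjacent_intervals (hint _ _) (hint _ _), heven, ← hconst]
  ring

def kappaProfile (u : ℝ) : ℝ := u * (∫ t in (0)..u, exp (-t ^ 2 / 2)) + exp (-u ^ 2 / 2)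

lemma kappaProfile_eq_one_add_integral (u : ℝ) :
    kappaProfile u = 1 + ∫ t in (0)..u, (u - t) * exp (-t ^ 2 / 2) := by
  simp_rw [sub_mul]
  rw [intervalIntegral.integral_sub (by apply Continuous.intervalIntegrable; fun_prop)
    (by apply Continuous.intervalIntegrable; fun_prop), intervalIntegral.integral_const_mul,
    integral_mul_exp_neg_sq_div_two, kappaProfile]
  rw [show -(0 : ℝ) ^ 2 / 2 = 0 by norm_num, exp_zero]
  ring

def kappaTaylor (x : ℝ) : ℝ := 1 + x / 2 - x ^ 2 / 24 + x ^ 3 / 240 - x ^ 4 / 2688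

lemma kappaTaylor_nonneg {x : ℝ} (hx₀ : 0 ≤ x) (hx₄ : x ≤ 4) : 0 ≤ kappaTaylor x := by
  unfold kappaTaylor
  nlinarith [mul_nonneg hx₀ (sub_nonneg.2 hx₄), mul_nonneg (mul_nonneg hx₀ hx₀) (sub_nonneg.2 hx₄),
    pow_nonneg hx₀ 3]

lemma one_add_add_sq_div_le_kappaTaylor_sq {x : ℝ} (hx₀ : 0 ≤ x) (hx₄ : x ≤ 4) :
    1 + x + x ^ 2 / 30 ≤ kappaTaylor x ^ 2 := by
  unfold kappaTaylor
  nlinarith [mul_nonneg hx₀ (sub_nonneg.2 hx₄), mul_nonneg (mul_nonneg hx₀ hx₀) (sub_nonneg.2 hx₄),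
    pow_nonneg hx₀ 3, pow_nonneg hx₀ 4, mul_nonneg (pow_nonneg hx₀ 3) (sub_nonneg.2 hx₄)]

lemma integral_sub_mul_taylor_eq_kappaTaylor_sub_one (u : ℝ) :
    ∫ t in (0)..u, (u - t) * (1 - t ^ 2 / 2 + t ^ 4 / 8 - t ^ 6 / 48)
      = kappaTaylor (u ^ 2) - 1 := by
  have hexpand (t : ℝ) : (u - t) * (1 - t ^ 2 / 2 + t ^ 4 / 8 - t ^ 6 / 48) = u - t
      - u / 2 * t ^ 2 + t ^ 3 / 2 + u / 8 * t ^ 4 - t ^ 5 / 8 - u / 48 * t ^ 6 + t ^ 7 / 48 := by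
    ring
  simp_rw [hexpand]
  simp (disch := exact Continuous.intervalIntegrable (by fun_prop) _ _) only
    [intervalIntegral.integral_add, intervalIntegral.integral_sub,
      intervalIntegral.integral_const_mul, intervalIntegral.integral_div, integral_pow]
  rw [intervalIntegral.integral_sub (by simp) (by simp)]
  simp only [intervalIntegral.integral_const, integral_id, smul_eq_mul, kappaTaylor]
  ring

lemma kappaTaylor_le_kappaProfile {u : ℝ} (hu : 0 ≤ u) : kappaTaylor (u ^ 2) ≤ kappaProfile u := by
  have hmono : ∫ t in (0)..u, (u - t) * (1 - t ^ 2 / 2 + t ^ 4 / 8 - t ^ 6 / 48)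
      ≤ ∫ t in (0)..u, (u - t) * exp (-t ^ 2 / 2) := by
    refine intervalIntegral.integral_mono_on hu (Continuous.intervalIntegrable (by fun_prop) _ _)
      (Continuous.intervalIntegrable (by fun_prop) _ _) fun t ht ↦ ?_
    have h := one_sub_add_sub_le_exp_neg (x := t ^ 2 / 2) (by positivity)
    rw [← neg_div] at h
    have ht' : 0 ≤ u - t := by linarith [ht.2]
    calc (u - t) * (1 - t ^ 2 / 2 + t ^ 4 / 8 - t ^ 6 / 48)
        = (u - t) * (1 - t ^ 2 / 2 + (t ^ 2 / 2) ^ 2 / 2 - (t ^ 2 / 2) ^ 3 / 6) := by ring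
      _ ≤ (u - t) * exp (-t ^ 2 / 2) := by gcongr
  rw [integral_sub_mul_taylor_eq_kappaTaylor_sub_one] at hmono
  rw [kappaProfile_eq_one_add_integral]
  linarith

lemma one_add_sq_add_le_kappaProfile_sq {u : ℝ} (hu₀ : 0 ≤ u) (hu₂ : u ≤ 2) :
    1 + u ^ 2 + u ^ 4 / 30 ≤ kappaProfile u ^ 2 := by
  have hx₀ : 0 ≤ u ^ 2 := sq_nonneg u
  have hx₄ : u ^ 2 ≤ 4 := by nlinarith
  calc 1 + u ^ 2 + u ^ 4 / 30 = 1 + u ^ 2 + (u ^ 2) ^ 2 / 30 := by ring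
    _ ≤ kappaTaylor (u ^ 2) ^ 2 := one_add_add_sq_div_le_kappaTaylor_sq hx₀ hx₄
    _ ≤ kappaProfile u ^ 2 := by
        gcongr
        · exact kappaTaylor_nonneg hx₀ hx₄
        · exact kappaTaylor_le_kappaProfile hu₀

lemma sqrt_pi_div_two_mul_le_kappaProfile (u : ℝ) : √(π / 2) * u ≤ kappaProfile u := by
  have hsplit := intervalIntegral.integral_interval_add_Ioi (a := 0) (b := u)
    integrable_exp_neg_sq_div_two.integrableOn integrable_exp_neg_sq_div_two.integrableOn
  rw [integral_Ioi_zero_exp_neg_sq_div_two] at hsplit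
  have hmills := mul_integral_Ioi_exp_neg_sq_div_two_le u
  rw [kappaProfile, ← hsplit]
  linarith

/-- With `u = a/(2σ₁)` and
`κ = (a/2)P(|Z| ≤ u) + √(2/π) σ₁ e^{-u²/2}` for `Z ~ N(0,1)`:
`κ² - (2/π)(σ₁² + a²/4) ≥ a⁴/(240σ₁²π)` for `0 ≤ a ≤ 4σ₁`, and
`κ² - (2/π)(σ₁² + a²/4) ≥ a²/40` for `a ≥ 4σ₁`. -/
theorem kappa_lower_bound (a σ1 : ℝ) (ha : 0 ≤ a) (hσ : 0 < σ1) :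
    let u : ℝ := a / (2 * σ1)
    let κ : ℝ := a/2 * (gaussianReal 0 1 {z | |z| ≤ u}).toReal
      + Real.sqrt (2/π) * σ1 * Real.exp (-(u^2) / 2)
    (a ≤ 4 * σ1 → a^4 / (240 * σ1^2 * π) ≤ κ^2 - 2/π * (σ1^2 + a^2/4)) ∧
    (4 * σ1 ≤ a → a^2 / 40 ≤ κ^2 - 2/π * (σ1^2 + a^2/4)) := by
  intro u κ
  have hu : 0 ≤ u := by positivity
  have ha_eq : a = 2 * σ1 * u := by simp only [u]; field_simp
  have hκ : κ = √(2 / π) * σ1 * kappaProfile u := by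
    simp only [κ, kappaProfile, gaussianReal_abs_le_toReal hu]
    rw [ha_eq]; ring
  have hgap : κ ^ 2 - 2 / π * (σ1 ^ 2 + a ^ 2 / 4)
      = 2 / π * σ1 ^ 2 * (kappaProfile u ^ 2 - 1 - u ^ 2) := by
    rw [hκ, mul_pow, mul_pow, sq_sqrt (by positivity), ha_eq]; ring
  rw [hgap]
  refine ⟨fun h ↦ ?_, fun h ↦ ?_⟩
  · have hu₂ : u ≤ 2 := by rw [div_le_iff₀ (by positivity)]; linarith
    have hprofile := one_add_sq_add_le_kappaProfile_sq hu hu₂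
    calc a ^ 4 / (240 * σ1 ^ 2 * π) = 2 / π * σ1 ^ 2 * (u ^ 4 / 30) := by
          rw [ha_eq]; field_simp; ring
      _ ≤ 2 / π * σ1 ^ 2 * (kappaProfile u ^ 2 - 1 - u ^ 2) := by gcongr; linarith
  · have hu₂ : 2 ≤ u := by rw [le_div_iff₀ (by positivity)]; linarith
    have hsq : π / 2 * u ^ 2 ≤ kappaProfile u ^ 2 := by
      have := pow_le_pow_left₀ (by positivity) (sqrt_pi_div_two_mul_le_kappaProfile u) 2
      rwa [mul_pow, sq_sqrt (by positivity)] at this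
    calc a ^ 2 / 40 = 2 / π * σ1 ^ 2 * (π / 20 * u ^ 2) := by
          rw [ha_eq]; field_simp; ring
      _ ≤ 2 / π * σ1 ^ 2 * (kappaProfile u ^ 2 - 1 - u ^ 2) := by
          gcongr
          nlinarith [pi_gt_three]
end
end
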